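/- Let s be an infinite word over a finite alphabet that is abelian periodic with period p (possibly with preperiod). Then the abelian complexity of s is bounded; specifically, for every n, the number of abelian equivalence classes of factors of s of length n is at most a constant independent of n. -/
import Mathlib

/-- Number of occurrences of letter `x` in the factor of `s` of length `l`
starting at position `i`. -/
def cnt {σ : Type*} [DecidableEq σ] (s : ℕ → σ) (x : σ) (i l : ℕ) : ℕ :=
  ((Finset.range l).filter (fun k => s (i + k) = x)).card

lemma cnt_le {σ : Type*} [DecidableEq σ] (s : ℕ → σ) (x : σ) (i l : ℕ) :
    cnt s x i l ≤ l := by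
  calc cnt s x i l ≤ (Finset.range l).card := Finset.card_filter_le _ _
  _ = l := Finset.card_range l

lemma cnt_add {σ : Type*} [DecidableEq σ] (s : ℕ → σ) (x : σ) (i a b : ℕ) :
    cnt s x i (a + b) = cnt s x i a + cnt s x (i + a) b := by
  induction b with
  | zero => simp [cnt]
  | succ b ih =>
    have h1 : a + (b + 1) = (a + b) + 1 := by ring
    rw [h1]
    unfold cnt at ih ⊢
    rw [Finset.range_add_one, Finset.filter_insert]
    conv_rhs => rw [Finset.range_add_one, Finset.filter_insert]
    have h2 : i + (a + b) = i + a + b := by ring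
    by_cases h : s (i + (a + b)) = x
    · rw [if_pos h, if_pos (by rwa [← h2])]
      rw [Finset.card_insert_of_notMem (by simp), Finset.card_insert_of_notMem (by simp)]
      omega
    · rw [if_neg h, if_neg (by rwa [← h2])]
      exact ih

theorem stmt_16 {σ : Type*} [DecidableEq σ] [Fintype σ]
    (s : ℕ → σ) (p r : ℕ) (hp : 0 < p)
    (habper : ∀ k : ℕ, ∀ x : σ, cnt s x (r + k * p) p = cnt s x r p) :
    ∃ C : ℕ, ∀ n : ℕ,
      Set.ncard {v : σ → ℕ | ∃ i : ℕ, v = fun x => cnt s x i n} ≤ C := by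
  classical
  set q : σ → ℕ := fun x => cnt s x r p with hq
  -- prefix counts
  set P : σ → ℕ → ℕ := fun x m => cnt s x 0 m with hP
  have hPadd : ∀ x a b, P x (a + b) = P x a + cnt s x a b := by
    intro x a b
    have := cnt_add s x 0 a b
    simpa using this
  -- linear growth along full blocks
  have hblock : ∀ x k, P x (r + k * p) = P x r + k * q x := by
    intro x k
    induction k with
    | zero => simp
    | succ k ih =>
      have h1 : r + (k + 1) * p = (r + k * p) + p := by ring
      rw [h1, hPadd, ih, habper k x]
      ring
  have hq_le : ∀ x, q x ≤ p := fun x => cnt_le s x r p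
  -- decomposition for m ≥ r
  have hdec : ∀ x m, r ≤ m → ∃ k e, e < p ∧ P x m = P x r + k * q x + e ∧
      m = r + k * p + (m - (r + k * p)) ∧ m - (r + k * p) < p ∧ e ≤ m - (r + k * p) := by
    intro x m hm
    set k := (m - r) / p
    set t := (m - r) % p
    have ht : t < p := Nat.mod_lt _ hp
    have hm2 : m = r + k * p + t := by
      have h := Nat.div_add_mod (m - r) p
      have hkp : k * p = p * ((m - r) / p) := Nat.mul_comm _ _
      omega
    refine ⟨k, cnt s x (r + k * p) t, ?_, ?_, ?_, ?_, ?_⟩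
    · exact lt_of_le_of_lt (cnt_le _ _ _ _) ht
    · conv_lhs => rw [hm2]
      rw [hPadd, hblock]
    · omega
    · omega
    · have : m - (r + k * p) = t := by omega
      rw [this]
      exact cnt_le _ _ _ _
  -- deviation bound in ℤ for m ≥ r
  have hdev : ∀ x m, r ≤ m →
      |(p : ℤ) * P x m - m * q x - ((p : ℤ) * P x r - r * q x)| ≤ (p : ℤ) ^ 2 := by
    intro x m hm
    obtain ⟨k, e, he, hPm, hmeq, htlt, helet⟩ := hdec x m hm
    set t := m - (r + k * p) with ht
    have h1 : (m : ℤ) = r + k * p + t := by exact_mod_cast hmeq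
    have h2 : (P x m : ℤ) = P x r + k * q x + e := by exact_mod_cast hPm
    rw [abs_le]
    have hqx : (q x : ℤ) ≤ p := by exact_mod_cast hq_le x
    have he' : (e : ℤ) < p := by exact_mod_cast he
    have ht' : (t : ℤ) < p := by exact_mod_cast htlt
    have hq0 : (0 : ℤ) ≤ q x := Int.natCast_nonneg _
    have ht0 : (0 : ℤ) ≤ t := Int.natCast_nonneg _
    have he0 : (0 : ℤ) ≤ e := Int.natCast_nonneg _
    have hp' : (0 : ℤ) < p := by exact_mod_cast hp
    constructor <;> nlinarith [h1, h2]
  -- uniform closeness of all factor counts to the one starting at r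
  set D : ℕ := 4 * p + 2 * r with hD
  have key : ∀ x i n, cnt s x r n ≤ cnt s x i n + D ∧ cnt s x i n ≤ cnt s x r n + D := by
    intro x i n
    have hir : ∀ a b : ℕ, a ≤ b → P x a ≤ P x b ∧ P x b ≤ P x a + (b - a) := by
      intro a b hab
      have h := hPadd x a (b - a)
      have h2 : a + (b - a) = b := by omega
      rw [h2] at h
      have := cnt_le s x a (b - a)
      omega
    have hcnti : P x (i + n) = P x i + cnt s x i n := hPadd x i n
    have hcntr : P x (r + n) = P x r + cnt s x r n := hPadd x r n
    by_cases hi : r ≤ i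
    · -- use the deviation bound
      have d1 := hdev x i hi
      have d2 := hdev x (i + n) (le_trans hi (Nat.le_add_right _ _))
      have d3 := hdev x (r + n) (Nat.le_add_right _ _)
      have e1 : (P x (i + n) : ℤ) = P x i + cnt s x i n := by exact_mod_cast hcnti
      have e2 : (P x (r + n) : ℤ) = P x r + cnt s x r n := by exact_mod_cast hcntr
      rw [abs_le] at d1 d2 d3
      have hp' : (0 : ℤ) < p := by exact_mod_cast hp
      have m1 : (p : ℤ) * cnt s x i n =
          ((p : ℤ) * P x (i + n) - (↑i + ↑n) * q x - ((p : ℤ) * P x r - r * q x))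
          - ((p : ℤ) * P x i - i * q x - ((p : ℤ) * P x r - r * q x)) + n * q x := by
        push_cast at e1 ⊢
        linear_combination (-(p : ℤ)) * e1
      have m2 : (p : ℤ) * cnt s x r n =
          ((p : ℤ) * P x (r + n) - (↑r + ↑n) * q x - ((p : ℤ) * P x r - r * q x)) + n * q x := by
        push_cast at e2 ⊢
        linear_combination (-(p : ℤ)) * e2
      push_cast at d1 d2 d3
      have hA : (p : ℤ) * cnt s x i n ≤ p * (cnt s x r n + 4 * p) := by linarith [m1, m2, d1.1, d1.2, d2.1, d2.2, d3.1, d3.2]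
      have hB : (p : ℤ) * cnt s x r n ≤ p * (cnt s x i n + 4 * p) := by linarith [m1, m2, d1.1, d1.2, d2.1, d2.2, d3.1, d3.2]
      have hA' : (cnt s x i n : ℤ) ≤ cnt s x r n + 4 * p := le_of_mul_le_mul_left hA hp'
      have hB' : (cnt s x r n : ℤ) ≤ cnt s x i n + 4 * p := le_of_mul_le_mul_left hB hp'
      have hA'' : cnt s x i n ≤ cnt s x r n + 4 * p := by exact_mod_cast hA'
      have hB'' : cnt s x r n ≤ cnt s x i n + 4 * p := by exact_mod_cast hB'
      omega
    · -- i < r : crude Lipschitz bound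
      push_neg at hi
      have l1 := hir i r (le_of_lt hi)
      have l2 := hir (i + n) (r + n) (by omega)
      omega
  -- conclusion by counting
  refine ⟨(2 * D + 1) ^ Fintype.card σ, fun n => ?_⟩
  set T : Finset (σ → ℕ) :=
    Fintype.piFinset fun x => Finset.Icc (cnt s x r n - D) (cnt s x r n + D) with hT
  have hsub : {v : σ → ℕ | ∃ i : ℕ, v = fun x => cnt s x i n} ⊆ ↑T := by
    rintro v ⟨i, rfl⟩
    simp only [hT, Finset.coe_sort_coe, Finset.mem_coe, Fintype.mem_piFinset, Finset.mem_Icc]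
    intro x
    have := key x i n
    omega
  calc Set.ncard {v : σ → ℕ | ∃ i : ℕ, v = fun x => cnt s x i n}
      ≤ Set.ncard (↑T : Set (σ → ℕ)) := Set.ncard_le_ncard hsub T.finite_toSet
    _ = T.card := Set.ncard_coe_finset T
    _ ≤ (2 * D + 1) ^ Fintype.card σ := by
        rw [hT, Fintype.card_piFinset]
        calc ∏ x, (Finset.Icc (cnt s x r n - D) (cnt s x r n + D)).card
            ≤ ∏ _x : σ, (2 * D + 1) := by
              apply Finset.prod_le_prod'
              intro x _
              rw [Nat.card_Icc]
              omega
          _ = (2 * D + 1) ^ Fintype.card σ := by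
              rw [Finset.prod_const, Finset.card_univ]
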